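/- Let Q be a unital quantale and (A,𝔸), (B,𝔹) Q-preordered sets. Let F be a map sending contravariant presheaves on 𝔸 to covariant presheaves on 𝔹 which is a left adjoint Q-functor, i.e., there is a map G sending covariant presheaves on 𝔹 to contravariant presheaves on 𝔸 such that P†B(F(μ), λ) = PA(μ, G(λ)) for all contravariant presheaves μ on 𝔸 and covariant presheaves λ on 𝔹, explicitly ⨅_{y∈B} λ(y)∖F(μ)(y) = ⨅_{x∈A} G(λ)(x)/μ(x). Then F is the Isbell map of the Q-distributor φ(x,y) := F(𝔸(−,x))(y): for every contravariant presheaf μ on 𝔸 and every y ∈ B, F(μ)(y) = ⨅_{x∈A} F(𝔸(−,x))(y)/μ(x), where 𝔸(−,x) denotes the representable presheaf x' ↦ 𝔸(x',x). -/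
import Mathlib


universe u

/-- A unital quantale: a complete lattice with a monoid structure whose multiplication
preserves arbitrary suprema in each variable. -/
class UnitalQuantale (Q : Type u) extends CompleteLattice Q, Monoid Q where
  mul_sSup : ∀ (a : Q) (S : Set Q), a * sSup S = ⨆ b ∈ S, a * b
  sSup_mul : ∀ (S : Set Q) (a : Q), sSup S * a = ⨆ b ∈ S, b * a

variable {Q : Type u} [UnitalQuantale Q]

/-- The left residual `b / a = ⨆ {c | c * a ≤ b}`. -/
def qdivr (b a : Q) : Q := sSup {c : Q | c * a ≤ b}

/-- The right residual `a ∖ b = ⨆ {c | a * c ≤ b}`. -/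
def qdivl (a b : Q) : Q := sSup {c : Q | a * c ≤ b}


lemma qmul_mono_left (a : Q) {b c : Q} (h : b ≤ c) : a * b ≤ a * c := by
  have h1 : a * sSup ({b, c} : Set Q) = ⨆ x ∈ ({b, c} : Set Q), a * x :=
    UnitalQuantale.mul_sSup a {b, c}
  have h2 : sSup ({b, c} : Set Q) = c := by rw [sSup_pair, sup_eq_right.mpr h]
  rw [h2] at h1
  rw [h1]
  exact le_biSup (fun x : Q => a * x) (Set.mem_insert _ _)

lemma qmul_mono_right {b c : Q} (h : b ≤ c) (a : Q) : b * a ≤ c * a := by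
  have h1 : sSup ({b, c} : Set Q) * a = ⨆ x ∈ ({b, c} : Set Q), x * a :=
    UnitalQuantale.sSup_mul {b, c} a
  have h2 : sSup ({b, c} : Set Q) = c := by rw [sSup_pair, sup_eq_right.mpr h]
  rw [h2] at h1
  rw [h1]
  exact le_biSup (fun x : Q => x * a) (Set.mem_insert _ _)

lemma qdivr_mul_le (b a : Q) : qdivr b a * a ≤ b := by
  rw [qdivr, UnitalQuantale.sSup_mul]
  exact iSup_le fun d => iSup_le fun hd => hd

lemma le_qdivr {c b a : Q} : c ≤ qdivr b a ↔ c * a ≤ b :=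
  ⟨fun h => le_trans (qmul_mono_right h a) (qdivr_mul_le b a), fun h => le_sSup h⟩

lemma mul_qdivl_le (a b : Q) : a * qdivl a b ≤ b := by
  rw [qdivl, UnitalQuantale.mul_sSup]
  exact iSup_le fun d => iSup_le fun hd => hd

lemma le_qdivl {c a b : Q} : c ≤ qdivl a b ↔ a * c ≤ b :=
  ⟨fun h => le_trans (qmul_mono_left a h) (mul_qdivl_le a b), fun h => le_sSup h⟩

lemma yoneda_contra {A : Type*} (𝔸 : A → A → Q) (hrefl : ∀ x, (1 : Q) ≤ 𝔸 x x)
    (μ : A → Q) (hμ : ∀ x x', μ x' * 𝔸 x x' ≤ μ x) (x : A) :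
    (⨅ x', qdivr (μ x') (𝔸 x' x)) = μ x := by
  apply le_antisymm
  · refine le_trans (iInf_le _ x) ?_
    have h1 : qdivr (μ x) (𝔸 x x) ≤ qdivr (μ x) (𝔸 x x) * 𝔸 x x := by
      calc qdivr (μ x) (𝔸 x x) = qdivr (μ x) (𝔸 x x) * 1 := (mul_one _).symm
        _ ≤ qdivr (μ x) (𝔸 x x) * 𝔸 x x := qmul_mono_left _ (hrefl x)
    exact le_trans h1 (qdivr_mul_le _ _)
  · exact le_iInf fun x' => le_qdivr.mpr (hμ x' x)

lemma yoneda_co {B : Type*} (𝔹 : B → B → Q) (hrefl : ∀ y, (1 : Q) ≤ 𝔹 y y)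
    (lam : B → Q) (hlam : ∀ y y', 𝔹 y y' * lam y ≤ lam y') (y : B) :
    (⨅ y', qdivl (𝔹 y y') (lam y')) = lam y := by
  apply le_antisymm
  · refine le_trans (iInf_le _ y) ?_
    have h1 : qdivl (𝔹 y y) (lam y) ≤ 𝔹 y y * qdivl (𝔹 y y) (lam y) := by
      calc qdivl (𝔹 y y) (lam y) = 1 * qdivl (𝔹 y y) (lam y) := (one_mul _).symm
        _ ≤ 𝔹 y y * qdivl (𝔹 y y) (lam y) := qmul_mono_right (hrefl y) _
    exact le_trans h1 (mul_qdivl_le _ _)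
  · exact le_iInf fun y' => le_qdivl.mpr (hlam y y')

/-- Every left adjoint map from contravariant presheaves on `𝔸` to covariant presheaves
on `𝔹` is the Isbell map of the distributor `φ(x,y) = F(𝔸(−,x))(y)`
(part of Theorem `Isbell_distributor_bijection`). -/
theorem left_adjoint_is_isbell {A B : Type*}
    (𝔸 : A → A → Q) (𝔹 : B → B → Q)
    (hArefl : ∀ x, (1 : Q) ≤ 𝔸 x x)
    (hAtrans : ∀ x y z, 𝔸 y z * 𝔸 x y ≤ 𝔸 x z)
    (hBrefl : ∀ y, (1 : Q) ≤ 𝔹 y y)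
    (hBtrans : ∀ x y z, 𝔹 y z * 𝔹 x y ≤ 𝔹 x z)
    (F : (A → Q) → (B → Q)) (G : (B → Q) → (A → Q))
    (hFmaps : ∀ μ : A → Q, (∀ x x', μ x' * 𝔸 x x' ≤ μ x) →
        ∀ y y', 𝔹 y y' * F μ y ≤ F μ y')
    (hGmaps : ∀ lam : B → Q, (∀ y y', 𝔹 y y' * lam y ≤ lam y') →
        ∀ x x', G lam x' * 𝔸 x x' ≤ G lam x)
    (hadj : ∀ (μ : A → Q) (lam : B → Q),
        (∀ x x', μ x' * 𝔸 x x' ≤ μ x) → (∀ y y', 𝔹 y y' * lam y ≤ lam y') →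
        (⨅ y, qdivl (lam y) (F μ y)) = ⨅ x, qdivr (G lam x) (μ x)) :
    ∀ μ : A → Q, (∀ x x', μ x' * 𝔸 x x' ≤ μ x) →
      ∀ y : B, F μ y = ⨅ x, qdivr (F (fun x' => 𝔸 x' x) y) (μ x) := by
  intro μ hμ y
  set k : B → Q := fun y' => 𝔹 y y' with hk_def
  have hk : ∀ z z', 𝔹 z z' * k z ≤ k z' := fun z z' => hBtrans y z z'
  have hphi : ∀ x : A, F (fun x' => 𝔸 x' x) y = G k x := by
    intro x
    have hh : ∀ a b, 𝔸 b x * 𝔸 a b ≤ 𝔸 a x := fun a b => hAtrans a b x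
    calc F (fun x' => 𝔸 x' x) y
        = ⨅ y', qdivl (k y') (F (fun x' => 𝔸 x' x) y') :=
          (yoneda_co 𝔹 hBrefl _ (hFmaps _ hh) y).symm
      _ = ⨅ x', qdivr (G k x') (𝔸 x' x) := hadj _ k hh hk
      _ = G k x := yoneda_contra 𝔸 hArefl (G k) (hGmaps k hk) x
  calc F μ y = ⨅ y', qdivl (k y') (F μ y') :=
        (yoneda_co 𝔹 hBrefl (F μ) (hFmaps μ hμ) y).symm
    _ = ⨅ x, qdivr (G k x) (μ x) := hadj μ k hμ hk
    _ = ⨅ x, qdivr (F (fun x' => 𝔸 x' x) y) (μ x) := by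
        exact iInf_congr fun x => by rw [hphi x]
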